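/- For every n ≥ 1, if w is a Kreweras word of length 3n then Pro(w) is also a Kreweras word of length 3n, and Pro is a bijection on the set of Kreweras words of length 3n. -/

import Mathlib

open scoped Classical

/-- The three letters `A`, `B`, `C`. -/
inductive V : Type
  | A | B | C
deriving DecidableEq

instance : Fintype V :=
  ⟨⟨{V.A, V.B, V.C}, by decide⟩, fun x => by cases x <;> decide⟩

/-- A Kreweras word of length `3n`: a word in `{A,B,C}` with equally many `A`'s, `B`'s
and `C`'s, every prefix of which has at least as many `A`'s as `B`'s and at least as
many `A`'s as `C`'s. -/
def IsKrewerasWord (n : ℕ) (w : List V) : Prop :=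
  w.length = 3 * n ∧ w.count V.A = n ∧ w.count V.B = n ∧ w.count V.C = n ∧
  ∀ i, (w.take i).count V.B ≤ (w.take i).count V.A ∧
    (w.take i).count V.C ≤ (w.take i).count V.A

/-- `ι(w)`: the smallest index `ι ≥ 1` such that the prefix `(w_1, …, w_ι)` has equally
many `A`'s as `B`'s or equally many `A`'s as `C`'s. -/
noncomputable def kiota (w : List V) : ℕ :=
  sInf {i : ℕ | 1 ≤ i ∧ ((w.take i).count V.A = (w.take i).count V.B ∨
    (w.take i).count V.A = (w.take i).count V.C)}

/-- Promotion of a Kreweras word: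
`Pro(w) = (w_2, …, w_{ι(w)−1}, A, w_{ι(w)+1}, …, w_{3n}, w_{ι(w)})`. -/
noncomputable def KPro (w : List V) : List V :=
  ((w.drop 1).take (kiota w - 2)) ++ [V.A] ++ w.drop (kiota w) ++
    [w.getD (kiota w - 1) V.A]

/-!
Write a Kreweras word as `w = A u c t` with `ι(w) = |u| + 2`. Minimality of `ι` says that every
prefix of `u` is still dominated by `A`, and the balance reached at `ι` forces `c ∈ {B, C}` with
`u` balanced in `c`; then `Pro(w) = u A t c`. A prefix of `Pro(w)` is either a prefix of `u` or
arises from a prefix of `w` by deleting `c`, so `Pro(w)` is again a Kreweras word.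
For injectivity, `u` is recovered from `Pro(w)` as the longest prefix before an `A` that is
balanced in the last letter `c`: past the moved `A`, the letters of `t` can never bring `c` level
with `A` again. An injective self-map of the finite set of Kreweras words is a bijection.
-/

namespace List

variable {α : Type*}

theorem take_cons_append_cons (a c : α) (u t : List α) (m : ℕ) :
    (a :: (u ++ c :: t)).take (u.length + 2 + m) = a :: (u ++ c :: t.take m) := by
  rw [show u.length + 2 + m = u.length + (m + 1) + 1 by omega, take_succ_cons,
    take_length_add_append, take_succ_cons]

theorem append_singleton_append_singleton_perm (a c : α) (u t : List α) :
    (u ++ [a] ++ t ++ [c]).Perm (a :: (u ++ c :: t)) := by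
  simpa using perm_middle.trans (.cons a (.append_left u (perm_append_singleton c t)))

theorem exists_eq_append_cons_of_lt {l : List α} {k : ℕ} (hk : k < l.length) :
    ∃ u c t, l = u ++ c :: t ∧ u.length = k :=
  ⟨l.take k, l[k], l.drop (k + 1), by rw [← drop_eq_getElem_cons hk, take_append_drop],
    by simp; omega⟩

end List

def IsADominant (l : List V) : Prop :=
  ∀ x i, (l.take i).count x ≤ (l.take i).count V.A

theorem isKrewerasWord_iff {n : ℕ} {w : List V} :
    IsKrewerasWord n w ↔ w.length = 3 * n ∧ w.count V.A = n ∧ w.count V.B = n ∧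
      w.count V.C = n ∧ IsADominant w := by
  refine and_congr_right' <| and_congr_right' <| and_congr_right' <| and_congr_right' ?_
  exact ⟨fun h x i => by cases x <;> simp [h i], fun h i => ⟨h _ _, h _ _⟩⟩

theorem IsKrewerasWord.isADominant {n : ℕ} {w : List V} (hw : IsKrewerasWord n w) :
    IsADominant w :=
  (isKrewerasWord_iff.mp hw).2.2.2.2

theorem finite_setOf_isKrewerasWord (n : ℕ) : {w | IsKrewerasWord n w}.Finite :=
  (List.finite_length_eq V (3 * n)).subset fun _ hw => hw.1

theorem IsADominant.eq_A_of_cons {a : V} {l : List V} (h : IsADominant (a :: l)) : a = V.A := by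
  have hB := h V.B 1
  have hC := h V.C 1
  cases a <;> simp_all

theorem IsADominant.count_take_le {c : V} {u t : List V}
    (hw : IsADominant (V.A :: (u ++ c :: t))) (hu : u.count V.A = u.count c) (hc : c ≠ V.A)
    (m : ℕ) : (t.take m).count c ≤ (t.take m).count V.A := by
  have hwm := hw c (u.length + 2 + m)
  rw [List.take_cons_append_cons] at hwm
  simp only [List.count_cons_self, List.count_cons_of_ne hc, List.count_cons_of_ne hc.symm,
    List.count_append] at hwm
  omega

/-- Prefixes of `u A t c` beyond `u` are, up to order, prefixes of `A u c t` minus `c`. -/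
theorem IsADominant.rotate {c : V} {u t : List V} (hw : IsADominant (V.A :: (u ++ c :: t)))
    (hu : IsADominant u) (hc : c ≠ V.A) : IsADominant (u ++ [V.A] ++ t ++ [c]) := by
  intro x i
  rw [show u ++ [V.A] ++ t ++ [c] = u ++ V.A :: (t ++ [c]) by simp]
  obtain hi | ⟨m, rfl⟩ : i ≤ u.length ∨ ∃ m, i = u.length + (m + 1) :=
    (le_or_gt i u.length).imp_right fun hi => ⟨i - u.length - 1, by omega⟩
  · rw [List.take_append_of_le_length hi]
    exact hu x i
  · have hwm := hw x (u.length + 2 + m)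
    have hlast := (List.take_sublist (m - t.length) [c]).count_le x
    rw [List.take_cons_append_cons] at hwm
    rw [List.take_length_add_append, List.take_succ_cons, List.take_append]
    simp only [List.count_cons, List.count_append, List.count_cons_of_ne hc, List.count_nil]
      at hwm hlast ⊢
    omega

/-- If `u'` were longer, it would be `u ++ A :: t.take m`, which has one more `A` than `x`. -/
theorem length_le_of_append_cons_eq {x : V} {u t u' t' : List V}
    (h : u ++ V.A :: t = u' ++ V.A :: t') (hx : x ≠ V.A)
    (hu : u.count V.A = u.count x) (hu' : u'.count V.A = u'.count x)
    (ht : ∀ m, (t.take m).count x ≤ (t.take m).count V.A) : u'.length ≤ u.length := by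
  by_contra! hlt
  obtain ⟨m, hm⟩ : ∃ m, u'.length = u.length + (m + 1) := ⟨u'.length - u.length - 1, by omega⟩
  have hu'_eq : u' = u ++ V.A :: t.take m := by
    have := congrArg (List.take u'.length) h
    rw [List.take_left' rfl, hm, List.take_length_add_append, List.take_succ_cons] at this
    exact this.symm
  have := ht m
  rw [hu'_eq] at hu'
  simp only [List.count_append, List.count_cons_self, List.count_cons_of_ne hx.symm] at hu'
  omega

theorem kPro_cons_append_cons {a c : V} {u t : List V}
    (h : kiota (a :: (u ++ c :: t)) = u.length + 2) :
    KPro (a :: (u ++ c :: t)) = u ++ [V.A] ++ t ++ [c] := by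
  simp [KPro, h, List.take_left']

theorem IsKrewerasWord.kiota_le_length_and_balanced {n : ℕ} {w : List V} (hn : 1 ≤ n)
    (hw : IsKrewerasWord n w) :
    kiota w ≤ w.length ∧ 1 ≤ kiota w ∧
      ((w.take (kiota w)).count V.A = (w.take (kiota w)).count V.B ∨
        (w.take (kiota w)).count V.A = (w.take (kiota w)).count V.C) := by
  obtain ⟨hlen, hA, hB, -⟩ := hw
  have hfull : w.length ∈ {i : ℕ | 1 ≤ i ∧ ((w.take i).count V.A = (w.take i).count V.B ∨
      (w.take i).count V.A = (w.take i).count V.C)} :=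
    ⟨by omega, .inl (by simp [hA, hB])⟩
  exact ⟨Nat.sInf_le hfull, Nat.sInf_mem ⟨_, hfull⟩⟩

theorem IsADominant.count_take_lt_of_lt_kiota {j : ℕ} {w : List V} {x : V}
    (hw : IsADominant w) (hj : 1 ≤ j) (hjι : j < kiota w) (hx : x ≠ V.A) :
    (w.take j).count x < (w.take j).count V.A := by
  have hjS := Nat.notMem_of_lt_sInf hjι
  simp only [Set.mem_ofPred_eq, not_and, not_or] at hjS
  have hle := hw x j
  cases x <;> simp at hx <;> omega

theorem IsKrewerasWord.exists_decomposition {n : ℕ} {w : List V} (hn : 1 ≤ n)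
    (hw : IsKrewerasWord n w) :
    ∃ u c t, w = V.A :: (u ++ c :: t) ∧ kiota w = u.length + 2 ∧ c ≠ V.A ∧
      IsADominant u ∧ u.count V.A = u.count c := by
  obtain ⟨hιle, hι1, hιbal⟩ := hw.kiota_le_length_and_balanced hn
  obtain ⟨tl, rfl⟩ : ∃ tl, w = V.A :: tl := by
    rcases w with _ | ⟨a, tl⟩
    · have hlen := hw.1
      simp at hlen
      omega
    · exact ⟨tl, by rw [hw.isADominant.eq_A_of_cons]⟩
  have hι2 : 2 ≤ kiota (V.A :: tl) := by
    by_contra!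
    rw [show kiota (V.A :: tl) = 1 by omega] at hιbal
    simp at hιbal
  obtain ⟨u, c, t, rfl, hu⟩ := List.exists_eq_append_cons_of_lt
    (show kiota (V.A :: tl) - 2 < tl.length by simp at hιle; omega)
  replace hu : kiota (V.A :: (u ++ c :: t)) = u.length + 2 := by omega
  have hudom : IsADominant u := by
    intro x i
    by_cases hx : x = V.A
    · rw [hx]
    have := hw.isADominant.count_take_lt_of_lt_kiota (j := min i u.length + 1) (by omega) (by omega) hx
    rw [List.take_succ_cons, List.take_append_of_le_length (min_le_right _ _),
      ← List.take_eq_take_min] at this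
    simp only [List.count_cons_self, List.count_cons_of_ne (Ne.symm hx)] at this
    omega
  have huB := hudom V.B u.length
  have huC := hudom V.C u.length
  simp only [List.take_length] at huB huC
  rw [hu, List.take_cons_append_cons _ _ _ _ 0] at hιbal
  refine ⟨u, c, t, rfl, hu, ?_, hudom, ?_⟩ <;>
    cases c <;>
    simp only [List.take_zero, List.count_append, List.count_cons, List.count_nil, beq_iff_eq,
      reduceCtorEq, if_true, if_false, ne_eq, not_true_eq_false, not_false_eq_true]
      at hιbal huB huC ⊢ <;>
    omega

theorem IsKrewerasWord.kPro {n : ℕ} {w : List V} (hn : 1 ≤ n) (hw : IsKrewerasWord n w) :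
    IsKrewerasWord n (KPro w) := by
  obtain ⟨u, c, t, rfl, hι, hc, hu, -⟩ := hw.exists_decomposition hn
  have hperm := List.append_singleton_append_singleton_perm V.A c u t
  obtain ⟨hlen, hA, hB, hC, hdom⟩ := isKrewerasWord_iff.mp hw
  rw [kPro_cons_append_cons hι, isKrewerasWord_iff, hperm.length_eq, hperm.count_eq,
    hperm.count_eq, hperm.count_eq]
  exact ⟨hlen, hA, hB, hC, hdom.rotate hu hc⟩

theorem injOn_kPro {n : ℕ} (hn : 1 ≤ n) : Set.InjOn KPro {w | IsKrewerasWord n w} := by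
  intro w hw w' hw' h
  obtain ⟨u, c, t, rfl, hι, hc, -, hbal⟩ := hw.exists_decomposition hn
  obtain ⟨u', c', t', rfl, hι', -, -, hbal'⟩ := hw'.exists_decomposition hn
  rw [kPro_cons_append_cons hι, kPro_cons_append_cons hι'] at h
  obtain ⟨heq, hcc'⟩ := List.append_inj' h rfl
  obtain rfl : c = c' := by simpa using hcc'
  rw [List.append_assoc, List.append_assoc, List.singleton_append, List.singleton_append] at heq
  have hlen := le_antisymm
    (length_le_of_append_cons_eq heq.symm hc hbal' hbal (hw'.isADominant.count_take_le hbal' hc))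
    (length_le_of_append_cons_eq heq hc hbal hbal' (hw.isADominant.count_take_le hbal hc))
  obtain ⟨rfl, ht⟩ := List.append_inj heq hlen
  rw [List.cons_inj_right _ |>.mp ht]

/-- For every `n ≥ 1`, promotion sends Kreweras words of length `3n` to Kreweras words
of length `3n`, and is a bijection on the set of Kreweras words of length `3n`. -/
theorem stmt15 (n : ℕ) (hn : 1 ≤ n) :
    (∀ w, IsKrewerasWord n w → IsKrewerasWord n (KPro w)) ∧
      Set.BijOn KPro {w | IsKrewerasWord n w} {w | IsKrewerasWord n w} := by
  have hmaps : ∀ w, IsKrewerasWord n w → IsKrewerasWord n (KPro w) := fun _ hw => hw.kPro hn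
  exact ⟨hmaps,
    ((finite_setOf_isKrewerasWord n).injOn_iff_bijOn_of_mapsTo hmaps).mp (injOn_kPro hn)⟩
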